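/- arXiv:2110.00255 — 4 statements merged into one kernel-verified Lean document; each statement's English description precedes it below -/
import Mathlib

section
/- Let O_C be the complexified octonions and z ∈ O_C a nonzero element with z·z̄ = 0. Then the subspaces L_z = zO_C and R_z = O_C z are isotropic of dimension 4 for the quadratic form given by the octonionic norm; moreover L_z equals the kernel of left multiplication by z̄ and R_z equals the kernel of right multiplication by z̄. -/
open Module

/-- A model of the complexified octonion algebra: an 8-dimensional complex vector space
with a bilinear (nonassociative) multiplication, unit, conjugation, and the
(polarized) multiplicative norm form, satisfying the standard octonion axioms
(alternativity, composition law, etc.). -/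
structure ComplexOctonionAlgebra (O : Type) [AddCommGroup O] [Module ℂ O] where
  mul : O →ₗ[ℂ] O →ₗ[ℂ] O
  one : O
  conj : O →ₗ[ℂ] O
  inner : O →ₗ[ℂ] O →ₗ[ℂ] ℂ
  dim_eq : finrank ℂ O = 8
  one_mul : ∀ x, mul one x = x
  mul_one : ∀ x, mul x one = x
  conj_conj : ∀ x, conj (conj x) = x
  conj_one : conj one = one
  conj_mul : ∀ x y, conj (mul x y) = mul (conj y) (conj x)
  inner_comm : ∀ x y, inner x y = inner y x
  inner_nondeg : ∀ x, (∀ y, inner x y = 0) → x = 0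
  mul_conj_self : ∀ x, mul x (conj x) = inner x x • one
  conj_mul_self : ∀ x, mul (conj x) x = inner x x • one
  polar : ∀ x y, mul x (conj y) + mul y (conj x) = (2 * inner x y) • one
  norm_mul : ∀ x y, inner (mul x y) (mul x y) = inner x x * inner y y
  alt_left : ∀ x y, mul x (mul x y) = mul (mul x x) y
  alt_right : ∀ x y, mul (mul x y) y = mul x (mul y y)

/-!
Write `N(x)` for `A.inner x x`. Alternativity gives `z̄ (z w) = N(z) w` and `(w z) z̄ = N(z) w`.
When `N(z) = 0`, the image of left multiplication by `z` is isotropic (as `N(z w) = N(z) N(w)`),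
and so is its kernel, since `z x = 0` forces `N(x) z = (z x) x̄ = 0`. An isotropic subspace of
the 8-dimensional nondegenerate quadratic space has dimension at most 4, so rank–nullity makes
both exactly 4. The first identity puts `z O` inside the kernel of left multiplication by `z̄`,
which is also 4-dimensional because `N(z̄) = N(z) = 0`, hence they are equal. Right
multiplication is handled in the same way, with the roles of the two identities exchanged.
-/

namespace LinearMap.BilinForm

variable {K V : Type*} [Field K] [AddCommGroup V] [Module K V] {B : LinearMap.BilinForm K V}

lemma le_orthogonal_of_isotropic [NeZero (2 : K)] (hB : B.IsSymm) {W : Submodule K V}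
    (hW : ∀ x ∈ W, B x x = 0) : W ≤ B.orthogonal W := by
  intro x hx
  rw [mem_orthogonal_iff]
  intro y hy
  have hsum : B (y + x) (y + x) = B y y + 2 * B y x + B x x := by
    simp only [map_add, LinearMap.add_apply, hB.eq x y]
    ring
  rw [hW _ (W.add_mem hy hx), hW y hy, hW x hx] at hsum
  exact (mul_eq_zero.mp (by linear_combination -hsum : (2 : K) * B y x = 0)).resolve_left
    two_ne_zero

lemma two_mul_finrank_le_of_isotropic [NeZero (2 : K)] [FiniteDimensional K V]
    (hB : B.IsSymm) (hnd : B.Nondegenerate) {W : Submodule K V} (hW : ∀ x ∈ W, B x x = 0) :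
    2 * finrank K W ≤ finrank K V := by
  have hle := Submodule.finrank_mono (le_orthogonal_of_isotropic hB hW)
  rw [finrank_orthogonal hnd] at hle
  have := W.finrank_le
  omega

end LinearMap.BilinForm

namespace ComplexOctonionAlgebra

variable {O : Type} [AddCommGroup O] [Module ℂ O] (A : ComplexOctonionAlgebra O)

def IsIsotropic (W : Submodule ℂ O) : Prop := ∀ x ∈ W, A.inner x x = 0

protected lemma finiteDimensional (A : ComplexOctonionAlgebra O) : FiniteDimensional ℂ O :=
  .of_finrank_pos (by rw [A.dim_eq]; norm_num)

protected lemma one_ne_zero : A.one ≠ 0 := by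
  intro h
  have : Subsingleton O := ⟨fun x y => by rw [← A.one_mul x, ← A.one_mul y, h]; simp⟩
  have h0 := A.dim_eq
  rw [finrank_zero_of_subsingleton] at h0
  omega

lemma conj_eq (x : O) : A.conj x = (2 * A.inner x A.one) • A.one - x := by
  have h := A.polar x A.one
  rw [A.conj_one, A.mul_one, A.one_mul] at h
  rw [eq_sub_iff_add_eq, add_comm, h]

lemma mul_self_eq (z : O) :
    A.mul z z = (2 * A.inner z A.one) • z - A.inner z z • A.one := by
  have h := A.mul_conj_self z
  rw [A.conj_eq z, map_sub, map_smul, A.mul_one] at h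
  rw [eq_sub_iff_add_eq, ← h]
  abel

lemma conj_mul_mul (z w : O) : A.mul (A.conj z) (A.mul z w) = A.inner z z • w := by
  rw [A.conj_eq z, map_sub, LinearMap.sub_apply, map_smul, LinearMap.smul_apply, A.one_mul,
    A.alt_left, A.mul_self_eq, map_sub, LinearMap.sub_apply, map_smul, map_smul,
    LinearMap.smul_apply, LinearMap.smul_apply, A.one_mul]
  abel

lemma mul_mul_conj (z w : O) : A.mul (A.mul w z) (A.conj z) = A.inner z z • w := by
  rw [A.conj_eq z, map_sub, map_smul, A.mul_one, A.alt_right, A.mul_self_eq, map_sub, map_smul,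
    map_smul, A.mul_one]
  abel

lemma inner_self_eq_zero_of_mul_conj_eq_zero {z : O} (h : A.mul z (A.conj z) = 0) :
    A.inner z z = 0 := by
  rw [A.mul_conj_self] at h
  exact (smul_eq_zero.mp h).resolve_right A.one_ne_zero

lemma inner_conj_self (x : O) : A.inner (A.conj x) (A.conj x) = A.inner x x := by
  have h := A.mul_conj_self (A.conj x)
  rw [A.conj_conj, A.conj_mul_self] at h
  exact smul_left_injective ℂ A.one_ne_zero h.symm

lemma conj_ne_zero {z : O} (hz : z ≠ 0) : A.conj z ≠ 0 := fun h =>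
  hz (by rw [← A.conj_conj z, h, map_zero])

lemma finrank_le_four_of_isIsotropic {W : Submodule ℂ O} (hW : A.IsIsotropic W) :
    finrank ℂ W ≤ 4 := by
  have := A.finiteDimensional
  have h := LinearMap.BilinForm.two_mul_finrank_le_of_isotropic (B := A.inner) ⟨A.inner_comm⟩
    ((LinearMap.IsRefl.nondegenerate_iff_separatingLeft fun x y h => A.inner_comm x y ▸ h).mpr
      A.inner_nondeg) hW
  rw [A.dim_eq] at h
  omega

lemma finrank_range_eq_four_and_finrank_ker_eq_four {f : O →ₗ[ℂ] O}
    (hrange : A.IsIsotropic (LinearMap.range f)) (hker : A.IsIsotropic (LinearMap.ker f)) :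
    finrank ℂ (LinearMap.range f) = 4 ∧ finrank ℂ (LinearMap.ker f) = 4 := by
  have := A.finiteDimensional
  have hsum := LinearMap.finrank_range_add_finrank_ker f
  rw [A.dim_eq] at hsum
  have := A.finrank_le_four_of_isIsotropic hrange
  have := A.finrank_le_four_of_isIsotropic hker
  omega

lemma isIsotropic_range_mul {z : O} (hN : A.inner z z = 0) :
    A.IsIsotropic (LinearMap.range (A.mul z)) := by
  rintro _ ⟨w, rfl⟩
  rw [A.norm_mul, hN, zero_mul]

lemma isIsotropic_range_mul_flip {z : O} (hN : A.inner z z = 0) :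
    A.IsIsotropic (LinearMap.range (A.mul.flip z)) := by
  rintro _ ⟨w, rfl⟩
  rw [LinearMap.flip_apply, A.norm_mul, hN, mul_zero]

lemma isIsotropic_ker_mul {z : O} (hz : z ≠ 0) : A.IsIsotropic (LinearMap.ker (A.mul z)) := by
  intro x hx
  have h := A.mul_mul_conj x z
  rw [LinearMap.mem_ker.mp hx, map_zero, LinearMap.zero_apply] at h
  exact (smul_eq_zero.mp h.symm).resolve_right hz

lemma isIsotropic_ker_mul_flip {z : O} (hz : z ≠ 0) :
    A.IsIsotropic (LinearMap.ker (A.mul.flip z)) := by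
  intro x hx
  have h := A.conj_mul_mul x z
  rw [LinearMap.mem_ker, LinearMap.flip_apply] at hx
  rw [hx, map_zero] at h
  exact (smul_eq_zero.mp h.symm).resolve_right hz

lemma finrank_range_mul_eq_four {z : O} (hz : z ≠ 0) (hN : A.inner z z = 0) :
    finrank ℂ (LinearMap.range (A.mul z)) = 4 :=
  (A.finrank_range_eq_four_and_finrank_ker_eq_four (A.isIsotropic_range_mul hN)
    (A.isIsotropic_ker_mul hz)).1

lemma finrank_ker_mul_eq_four {z : O} (hz : z ≠ 0) (hN : A.inner z z = 0) :
    finrank ℂ (LinearMap.ker (A.mul z)) = 4 :=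
  (A.finrank_range_eq_four_and_finrank_ker_eq_four (A.isIsotropic_range_mul hN)
    (A.isIsotropic_ker_mul hz)).2

lemma finrank_range_mul_flip_eq_four {z : O} (hz : z ≠ 0) (hN : A.inner z z = 0) :
    finrank ℂ (LinearMap.range (A.mul.flip z)) = 4 :=
  (A.finrank_range_eq_four_and_finrank_ker_eq_four (A.isIsotropic_range_mul_flip hN)
    (A.isIsotropic_ker_mul_flip hz)).1

lemma finrank_ker_mul_flip_eq_four {z : O} (hz : z ≠ 0) (hN : A.inner z z = 0) :
    finrank ℂ (LinearMap.ker (A.mul.flip z)) = 4 :=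
  (A.finrank_range_eq_four_and_finrank_ker_eq_four (A.isIsotropic_range_mul_flip hN)
    (A.isIsotropic_ker_mul_flip hz)).2

lemma range_mul_eq_ker_mul_conj {z : O} (hz : z ≠ 0) (hN : A.inner z z = 0) :
    LinearMap.range (A.mul z) = LinearMap.ker (A.mul (A.conj z)) := by
  have := A.finiteDimensional
  apply Submodule.eq_of_le_of_finrank_eq
  · rintro _ ⟨w, rfl⟩
    rw [LinearMap.mem_ker, A.conj_mul_mul, hN, zero_smul]
  · rw [A.finrank_range_mul_eq_four hz hN,
      A.finrank_ker_mul_eq_four (A.conj_ne_zero hz) (by rw [A.inner_conj_self, hN])]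

lemma range_mul_flip_eq_ker_mul_flip_conj {z : O} (hz : z ≠ 0) (hN : A.inner z z = 0) :
    LinearMap.range (A.mul.flip z) = LinearMap.ker (A.mul.flip (A.conj z)) := by
  have := A.finiteDimensional
  apply Submodule.eq_of_le_of_finrank_eq
  · rintro _ ⟨w, rfl⟩
    rw [LinearMap.mem_ker, LinearMap.flip_apply, LinearMap.flip_apply, A.mul_mul_conj, hN,
      zero_smul]
  · rw [A.finrank_range_mul_flip_eq_four hz hN,
      A.finrank_ker_mul_flip_eq_four (A.conj_ne_zero hz) (by rw [A.inner_conj_self, hN])]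

end ComplexOctonionAlgebra

/-- For a nonzero `z` in the complexified octonions with `z·z̄ = 0`,
the subspaces `L_z = z·O` and `R_z = O·z` are 4-dimensional and isotropic for the norm
form; moreover `L_z = ker` (left multiplication by `z̄`) and `R_z = ker` (right
multiplication by `z̄`). -/
theorem stmt3 (O : Type) [AddCommGroup O] [Module ℂ O]
    (A : ComplexOctonionAlgebra O) (z : O) (hz : z ≠ 0)
    (hiso : A.mul z (A.conj z) = 0) :
    finrank ℂ (LinearMap.range (A.mul z)) = 4 ∧
    finrank ℂ (LinearMap.range (A.mul.flip z)) = 4 ∧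
    (∀ x ∈ LinearMap.range (A.mul z), A.inner x x = 0) ∧
    (∀ x ∈ LinearMap.range (A.mul.flip z), A.inner x x = 0) ∧
    LinearMap.range (A.mul z) = LinearMap.ker (A.mul (A.conj z)) ∧
    LinearMap.range (A.mul.flip z) = LinearMap.ker (A.mul.flip (A.conj z)) := by
  have hN := A.inner_self_eq_zero_of_mul_conj_eq_zero hiso
  exact ⟨A.finrank_range_mul_eq_four hz hN, A.finrank_range_mul_flip_eq_four hz hN,
    A.isIsotropic_range_mul hN, A.isIsotropic_range_mul_flip hN,
    A.range_mul_eq_ker_mul_conj hz hN, A.range_mul_flip_eq_ker_mul_flip_conj hz hN⟩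
end

section
/- Let z be a nonzero isotropic octonion in the complexified octonions O_C. For any s, t ∈ O_C, one has z̄(s̄t)z̄ = 2⟨z, s̄t⟩ z̄, where ⟨·,·⟩ is the polarization of the norm form. In particular, for u = sz ∈ R_z and b = t z̄ ∈ R_{z̄}, the product ū·b is always a scalar multiple of z̄. -/
open Module

namespace CO5
variable {O : Type} [AddCommGroup O] [Module ℂ O] (A : ComplexOctonionAlgebra O)

lemma trace (x : O) : x + A.conj x = (2 * A.inner x A.one) • A.one := by
  have h := A.polar x A.one
  rwa [A.conj_one, A.mul_one, A.one_mul] at h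

lemma conj_eq (x : O) : A.conj x = (2 * A.inner x A.one) • A.one - x := by
  rw [eq_sub_iff_add_eq, add_comm]; exact trace A x

lemma one_ne {z : O} (hz : z ≠ 0) : A.one ≠ 0 := by
  intro h
  apply hz
  have := A.one_mul z
  rw [h] at this
  simpa using this.symm

lemma inner_one_one {z : O} (hz : z ≠ 0) : A.inner A.one A.one = 1 := by
  have h := A.mul_conj_self A.one
  rw [A.conj_one, A.mul_one] at h
  have h2 : (A.inner A.one A.one - 1) • A.one = 0 := by
    rw [sub_smul, one_smul, ← h, sub_self]
  rcases smul_eq_zero.mp h2 with h3 | h3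
  · exact sub_eq_zero.mp h3
  · exact absurd h3 (one_ne A hz)


lemma npl (a b c : O) :
    A.inner (A.mul a b) (A.mul c b) = A.inner a c * A.inner b b := by
  have h := A.norm_mul (a + c) b
  simp only [map_add, LinearMap.add_apply] at h
  have h1 := A.norm_mul a b
  have h2 := A.norm_mul c b
  have hc := A.inner_comm (A.mul a b) (A.mul c b)
  have hc2 := A.inner_comm a c
  linear_combination (h - h1 - h2 + hc - A.inner b b * hc2) / 2

lemma exchg (a b c d : O) :
    A.inner (A.mul a b) (A.mul c d) + A.inner (A.mul a d) (A.mul c b) =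
      2 * A.inner a c * A.inner b d := by
  have h := npl A a (b + d) c
  simp only [map_add, LinearMap.add_apply] at h
  have h1 := npl A a b c
  have h2 := npl A a d c
  have hc := A.inner_comm b d
  linear_combination h - h1 - h2 - A.inner a c * hc


section iso
variable {z : O}

lemma zz_eq (hziso : A.inner z z = 0) : A.mul z z = (2 * A.inner z A.one) • z := by
  have h := A.mul_conj_self z
  rw [conj_eq A z] at h
  simp only [map_sub, map_smul, A.mul_one, hziso, zero_smul] at h
  exact (sub_eq_zero.mp h).symm

lemma zbar_zu (hziso : A.inner z z = 0) (u : O) : A.mul (A.conj z) (A.mul z u) = 0 := by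
  rw [conj_eq A z]
  simp only [map_sub, map_smul, LinearMap.sub_apply, LinearMap.smul_apply, A.one_mul]
  rw [A.alt_left, zz_eq A hziso]
  simp only [map_smul, LinearMap.smul_apply, sub_self]

lemma uz_zbar (hziso : A.inner z z = 0) (u : O) : A.mul (A.mul u z) (A.conj z) = 0 := by
  rw [conj_eq A z]
  simp only [map_sub, map_smul, A.mul_one]
  rw [A.alt_right, zz_eq A hziso]
  simp only [map_smul, sub_self]

lemma Lmid (hziso : A.inner z z = 0) (w : O) :
    A.mul (A.conj z) (A.mul w (A.conj z)) = (2 * A.inner z w) • A.conj z := by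
  have hp : A.mul w (A.conj z) = (2 * A.inner w z) • A.one - A.mul z (A.conj w) := by
    rw [eq_sub_iff_add_eq]; exact A.polar w z
  rw [hp]
  simp only [map_sub, map_smul, A.mul_one, zbar_zu A hziso, sub_zero, A.inner_comm w z]


lemma inner_conj (hz : z ≠ 0) (x w : O) :
    A.inner (A.conj x) (A.conj w) = A.inner x w := by
  rw [conj_eq A x, conj_eq A w]
  simp only [map_sub, map_smul, LinearMap.sub_apply, LinearMap.smul_apply, smul_eq_mul]
  have h11 := inner_one_one A hz
  have h1 := A.inner_comm A.one w
  linear_combination (4 * A.inner x A.one * A.inner w A.one) * h11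
    - (2 * A.inner x A.one) * h1

lemma Rmid (hz : z ≠ 0) (hziso : A.inner z z = 0) (w : O) :
    A.mul (A.mul (A.conj z) w) (A.conj z) = (2 * A.inner z w) • A.conj z := by
  have hp : A.mul (A.conj z) w =
      (2 * A.inner (A.conj z) (A.conj w)) • A.one - A.mul (A.conj w) z := by
    rw [eq_sub_iff_add_eq]
    have h := A.polar (A.conj z) (A.conj w)
    rwa [A.conj_conj, A.conj_conj] at h
  rw [hp]
  simp only [map_sub, map_smul, LinearMap.sub_apply, LinearMap.smul_apply, A.one_mul,
    uz_zbar A hziso, sub_zero, inner_conj A hz]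

lemma inner_vzbar_one (hz : z ≠ 0) (v : O) :
    A.inner (A.mul v (A.conj z)) A.one = A.inner v z := by
  have h := exchg A v (A.conj z) A.one A.one
  simp only [A.one_mul, A.mul_one] at h
  have h2 : A.inner v (A.conj z) =
      2 * A.inner z A.one * A.inner v A.one - A.inner v z := by
    rw [conj_eq A z]
    simp only [map_sub, map_smul, smul_eq_mul]
    try ring
  have h3 : A.inner (A.conj z) A.one = A.inner z A.one := by
    rw [conj_eq A z]
    simp only [map_sub, map_smul, LinearMap.sub_apply, LinearMap.smul_apply, smul_eq_mul,
      inner_one_one A hz]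
    try ring
  linear_combination h - h2 + 2 * A.inner v A.one * h3

lemma part2aux (hz : z ≠ 0) (hziso : A.inner z z = 0) (w v : O) :
    A.mul (A.mul (A.conj z) w) (A.mul v (A.conj z)) =
      (4 * A.inner v z * A.inner w A.one
        - 2 * A.inner w (A.mul v (A.conj z))) • A.conj z := by
  set c : ℂ := 4 * A.inner v z * A.inner w A.one
        - 2 * A.inner w (A.mul v (A.conj z)) with hc
  have key : ∀ y, A.inner
      (A.mul (A.mul (A.conj z) w) (A.mul v (A.conj z)) - c • A.conj z) y = 0 := by
    intro y
    simp only [map_sub, map_smul, LinearMap.sub_apply, LinearMap.smul_apply, smul_eq_mul]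
    rw [sub_eq_zero]
    have e1 := exchg A (A.mul (A.conj z) w) (A.mul v (A.conj z)) y A.one
    simp only [A.mul_one] at e1
    have e2 := exchg A (A.conj z) w y (A.mul v (A.conj z))
    rw [Lmid A hziso v] at e2
    simp only [map_smul, LinearMap.smul_apply, smul_eq_mul] at e2
    have e3 := exchg A (A.conj z) w y A.one
    simp only [A.mul_one] at e3
    have e4 := inner_vzbar_one A hz v
    have h5 := A.inner_comm z v
    linear_combination e1 + 2 * (A.inner (A.mul (A.conj z) w) y) * e4 - e2
      + 2 * (A.inner (A.conj z) (A.mul y w)) * h5 + 2 * (A.inner v z) * e3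
  have h := A.inner_nondeg _ key
  rw [sub_eq_zero] at h
  exact h

end iso
end CO5

/-- For a nonzero isotropic octonion `z` and any `s, t`, one has
`z̄·(s̄·t)·z̄ = 2⟨z, s̄·t⟩·z̄` (the bracketing is irrelevant by alternativity; we fix
one).  In particular, for `u = s·z ∈ R_z` and `b = t·z̄ ∈ R_{z̄}`, the product `ū·b`
is always a scalar multiple of `z̄`. -/
theorem stmt5 (O : Type) [AddCommGroup O] [Module ℂ O]
    (A : ComplexOctonionAlgebra O) (z : O) (hz : z ≠ 0) (hziso : A.inner z z = 0) :
    (∀ s t : O,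
      A.mul (A.mul (A.conj z) (A.mul (A.conj s) t)) (A.conj z) =
        (2 * A.inner z (A.mul (A.conj s) t)) • A.conj z) ∧
    (∀ s t : O, ∃ c : ℂ,
      A.mul (A.conj (A.mul s z)) (A.mul t (A.conj z)) = c • A.conj z) := by
  constructor
  · intro s t
    exact CO5.Rmid A hz hziso (A.mul (A.conj s) t)
  · intro s t
    rw [A.conj_mul]
    exact ⟨_, CO5.part2aux A hz hziso (A.conj s) t⟩
end

section
/- In the root system F_4 with simple roots α_1, α_2 (long) and α_3, α_4 (short) in Bourbaki numbering, the orthogonal complement of the span of α_3 and α_4 inside the Cartan space is spanned by α_1 and β := α_1 + 3α_2 + 4α_3 + 2α_4; moreover both R ∩ span(α_3,α_4) and R ∩ span(α_1,β) are root subsystems of type A_2. -/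
open Matrix

/-- The root system of type `F₄` in `ℝ⁴` (Bourbaki conventions): the long roots
`±eᵢ±eⱼ`, the short roots `±eᵢ`, and the short roots `(±1,±1,±1,±1)/2`. -/
def F4Roots : Set (Fin 4 → ℝ) :=
  {v | ((∀ i, v i = 0 ∨ v i = 1 ∨ v i = -1) ∧ {i | v i ≠ 0}.ncard = 2) ∨
       ((∀ i, v i = 0 ∨ v i = 1 ∨ v i = -1) ∧ {i | v i ≠ 0}.ncard = 1) ∨
       (∀ i, v i = 1 / 2 ∨ v i = -1 / 2)}

/-- A set of vectors forms a root system of type `A₂`: six roots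
`{±γ, ±δ, ±(γ+δ)}` with `γ, δ` of equal length at `120°`. -/
def IsA2Subsystem (S : Set (Fin 4 → ℝ)) : Prop :=
  ∃ γ δ : Fin 4 → ℝ, γ ≠ 0 ∧
    S = {γ, δ, γ + δ, -γ, -δ, -(γ + δ)} ∧
    γ ⬝ᵥ γ = δ ⬝ᵥ δ ∧ 2 * (γ ⬝ᵥ δ) = -(γ ⬝ᵥ γ)

/-!
Since `β = e₁ + e₃`, the vector `a • γ + b • δ` of `span(γ, δ)` is `(b/2, -b/2, -b/2, a - b/2)`
for `(γ, δ) = (α₃, α₄)` and `(b, a, b - a, 0)` for `(γ, δ) = (α₁, β)`. Checking these against the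
coordinates and squared lengths of the roots of `F₄` leaves, in both planes, exactly the coefficient
pairs `±(1, 0), ±(0, 1), ±(1, 1)`, i.e. the roots of `A₂` written in a basis of simple roots.
-/

lemma dotProduct_self_eq_ncard_support {ι R : Type*} [Fintype ι] [Ring R] {v : ι → R}
    (hv : ∀ i, v i = 0 ∨ v i = 1 ∨ v i = -1) : v ⬝ᵥ v = {i | v i ≠ 0}.ncard := by
  classical
  have hsq : ∀ i, v i * v i = if v i ≠ 0 then 1 else 0 := fun i => by
    rcases hv i with h | h | h <;> simp [h]
  simp only [dotProduct, hsq, Finset.sum_boole, Set.ncard_eq_toFinset_card', Set.toFinset_ofPred]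

lemma mem_F4Roots_iff {v : Fin 4 → ℝ} :
    v ∈ F4Roots ↔
      ((∀ i, v i = 0 ∨ v i = 1 ∨ v i = -1) ∧ (v ⬝ᵥ v = 2 ∨ v ⬝ᵥ v = 1)) ∨
        ∀ i, v i = 1 / 2 ∨ v i = -1 / 2 := by
  rw [F4Roots, Set.mem_ofPred_eq, ← or_assoc, ← and_or_left]
  refine or_congr_left (and_congr_right fun hv => ?_)
  rw [dotProduct_self_eq_ncard_support hv]
  norm_cast

lemma vec4_mem_F4Roots_iff {x y z w : ℝ} :
    ![x, y, z, w] ∈ F4Roots ↔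
      ((x = 0 ∨ x = 1 ∨ x = -1) ∧ (y = 0 ∨ y = 1 ∨ y = -1) ∧ (z = 0 ∨ z = 1 ∨ z = -1) ∧
          (w = 0 ∨ w = 1 ∨ w = -1)) ∧
        (x * x + y * y + z * z + w * w = 2 ∨ x * x + y * y + z * z + w * w = 1) ∨
      (x = 1 / 2 ∨ x = -1 / 2) ∧ (y = 1 / 2 ∨ y = -1 / 2) ∧ (z = 1 / 2 ∨ z = -1 / 2) ∧
        (w = 1 / 2 ∨ w = -1 / 2) := by
  simp only [mem_F4Roots_iff, Fin.forall_fin_succ, cons_dotProduct_cons, dotProduct_of_isEmpty,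
    cons_val_zero, cons_val_succ, IsEmpty.forall_iff, and_true, add_zero, add_assoc]

/-- The roots of `A₂` in the basis of its simple roots. -/
def A2RootCoords : Set (ℝ × ℝ) := {(1, 0), (0, 1), (1, 1), (-1, 0), (0, -1), (-1, -1)}

lemma isA2Subsystem_inter_span {R : Set (Fin 4 → ℝ)} {γ δ : Fin 4 → ℝ} (hγ : γ ≠ 0)
    (hlen : γ ⬝ᵥ γ = δ ⬝ᵥ δ) (hangle : 2 * (γ ⬝ᵥ δ) = -(γ ⬝ᵥ γ))
    (hR : ∀ a b : ℝ, a • γ + b • δ ∈ R ↔ (a, b) ∈ A2RootCoords) :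
    IsA2Subsystem (R ∩ Submodule.span ℝ {γ, δ}) := by
  refine ⟨γ, δ, hγ, ?_, hlen, hangle⟩
  have hmem : ∀ a b : ℝ, (a, b) ∈ A2RootCoords → a • γ + b • δ ∈ R ∩ Submodule.span ℝ {γ, δ} :=
    fun a b hab => ⟨(hR a b).2 hab, Submodule.mem_span_pair.2 ⟨a, b, rfl⟩⟩
  ext v
  constructor
  · rintro ⟨hv, hspan⟩
    obtain ⟨a, b, rfl⟩ := Submodule.mem_span_pair.1 hspan
    simp only [A2RootCoords, Set.mem_insert_iff, Set.mem_singleton_iff, Prod.mk.injEq] at hR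
    rcases (hR a b).1 hv with ⟨rfl, rfl⟩ | ⟨rfl, rfl⟩ | ⟨rfl, rfl⟩ | ⟨rfl, rfl⟩ | ⟨rfl, rfl⟩ |
      ⟨rfl, rfl⟩ <;> simp [add_comm]
  · rintro (rfl | rfl | rfl | rfl | rfl | rfl)
    · simpa using hmem 1 0 (by simp [A2RootCoords])
    · simpa using hmem 0 1 (by simp [A2RootCoords])
    · simpa using hmem 1 1 (by simp [A2RootCoords])
    · simpa using hmem (-1) 0 (by simp [A2RootCoords])
    · simpa using hmem 0 (-1) (by simp [A2RootCoords])
    · simpa [add_comm] using hmem (-1) (-1) (by simp [A2RootCoords])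

lemma smul_α₃_add_smul_α₄ (a b : ℝ) :
    a • (![0, 0, 0, 1] : Fin 4 → ℝ) + b • ![1 / 2, -1 / 2, -1 / 2, -1 / 2] =
      ![b / 2, -(b / 2), -(b / 2), a - b / 2] := by
  ext i; fin_cases i <;> simp <;> ring

lemma smul_α₁_add_smul_β (a b : ℝ) :
    a • (![0, 1, -1, 0] : Fin 4 → ℝ) + b • ![1, 0, 1, 0] = ![b, a, b - a, 0] := by
  ext i; fin_cases i <;> simp; ring

lemma smul_α₃_add_smul_α₄_mem_F4Roots_iff (a b : ℝ) :
    a • (![0, 0, 0, 1] : Fin 4 → ℝ) + b • ![1 / 2, -1 / 2, -1 / 2, -1 / 2] ∈ F4Roots ↔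
      (a, b) ∈ A2RootCoords := by
  simp only [smul_α₃_add_smul_α₄, vec4_mem_F4Roots_iff, A2RootCoords, Set.mem_insert_iff,
    Set.mem_singleton_iff, Prod.mk.injEq]
  constructor
  · rintro (⟨⟨hx, -, -, hw⟩, hnorm⟩ | ⟨hx, -, -, hw⟩)
    · rcases hx with hx | hx | hx <;> rcases hw with hw | hw | hw <;> grind
    · rcases hx with hx | hx <;> rcases hw with hw | hw <;> grind
  · rintro (⟨rfl, rfl⟩ | ⟨rfl, rfl⟩ | ⟨rfl, rfl⟩ | ⟨rfl, rfl⟩ | ⟨rfl, rfl⟩ | ⟨rfl, rfl⟩) <;> norm_num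

lemma smul_α₁_add_smul_β_mem_F4Roots_iff (a b : ℝ) :
    a • (![0, 1, -1, 0] : Fin 4 → ℝ) + b • ![1, 0, 1, 0] ∈ F4Roots ↔ (a, b) ∈ A2RootCoords := by
  simp only [smul_α₁_add_smul_β, vec4_mem_F4Roots_iff, A2RootCoords, Set.mem_insert_iff,
    Set.mem_singleton_iff, Prod.mk.injEq]
  constructor
  · rintro (⟨⟨hx, hy, hz, -⟩, hnorm⟩ | ⟨-, -, -, hw⟩)
    · rcases hx with hx | hx | hx <;> rcases hy with hy | hy | hy <;> grind
    · norm_num at hw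
  · rintro (⟨rfl, rfl⟩ | ⟨rfl, rfl⟩ | ⟨rfl, rfl⟩ | ⟨rfl, rfl⟩ | ⟨rfl, rfl⟩ | ⟨rfl, rfl⟩) <;> norm_num

lemma orthogonal_α₃_α₄_eq_span :
    {v : Fin 4 → ℝ | v ⬝ᵥ ![0, 0, 0, 1] = 0 ∧ v ⬝ᵥ ![1 / 2, -1 / 2, -1 / 2, -1 / 2] = 0} =
      (Submodule.span ℝ {(![0, 1, -1, 0] : Fin 4 → ℝ), ![1, 0, 1, 0]} : Set (Fin 4 → ℝ)) := by
  ext v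
  obtain ⟨x, y, z, w, rfl⟩ : ∃ x y z w : ℝ, v = ![x, y, z, w] :=
    ⟨v 0, v 1, v 2, v 3, by ext i; fin_cases i <;> rfl⟩
  simp only [Set.mem_ofPred_eq, SetLike.mem_coe, Submodule.mem_span_pair, smul_α₁_add_smul_β,
    cons_dotProduct_cons, dotProduct_of_isEmpty, vecCons_inj, and_true]
  constructor
  · rintro ⟨hw, hx⟩
    norm_num at hw hx
    exact ⟨y, x, rfl, rfl, by linarith, hw.symm⟩
  · rintro ⟨a, b, rfl, rfl, rfl, rfl⟩
    constructor <;> ring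

lemma isA2Subsystem_F4Roots_inter_span_α₃_α₄ :
    IsA2Subsystem (F4Roots ∩
      Submodule.span ℝ {(![0, 0, 0, 1] : Fin 4 → ℝ), ![1 / 2, -1 / 2, -1 / 2, -1 / 2]}) :=
  isA2Subsystem_inter_span (by simp) (by norm_num) (by norm_num)
    smul_α₃_add_smul_α₄_mem_F4Roots_iff

lemma isA2Subsystem_F4Roots_inter_span_α₁_β :
    IsA2Subsystem (F4Roots ∩ Submodule.span ℝ {(![0, 1, -1, 0] : Fin 4 → ℝ), ![1, 0, 1, 0]}) :=
  isA2Subsystem_inter_span (by simp) (by norm_num) (by norm_num)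
    smul_α₁_add_smul_β_mem_F4Roots_iff

/-- In `F₄` with simple roots `α₁ = e₂-e₃`, `α₂ = e₃-e₄` (long) and
`α₃ = e₄`, `α₄ = (e₁-e₂-e₃-e₄)/2` (short), the orthogonal complement of
`span(α₃,α₄)` is spanned by `α₁` and `β := α₁+3α₂+4α₃+2α₄`, and both
`R ∩ span(α₃,α₄)` and `R ∩ span(α₁,β)` are root subsystems of type `A₂`. -/
theorem stmt13 :
    let α₁ : Fin 4 → ℝ := ![0, 1, -1, 0]
    let α₂ : Fin 4 → ℝ := ![0, 0, 1, -1]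
    let α₃ : Fin 4 → ℝ := ![0, 0, 0, 1]
    let α₄ : Fin 4 → ℝ := ![1 / 2, -1 / 2, -1 / 2, -1 / 2]
    let β : Fin 4 → ℝ := α₁ + (3 : ℝ) • α₂ + (4 : ℝ) • α₃ + (2 : ℝ) • α₄
    ({v : Fin 4 → ℝ | v ⬝ᵥ α₃ = 0 ∧ v ⬝ᵥ α₄ = 0} =
        (Submodule.span ℝ {α₁, β} : Set (Fin 4 → ℝ))) ∧
    IsA2Subsystem (F4Roots ∩ (Submodule.span ℝ {α₃, α₄} : Set (Fin 4 → ℝ))) ∧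
    IsA2Subsystem (F4Roots ∩ (Submodule.span ℝ {α₁, β} : Set (Fin 4 → ℝ))) := by
  intro α₁ α₂ α₃ α₄ β
  have hβ : β = ![1, 0, 1, 0] := by
    ext i; fin_cases i <;> norm_num [β, α₁, α₂, α₃, α₄]
  rw [hβ]
  exact ⟨orthogonal_α₃_α₄_eq_span, isA2Subsystem_F4Roots_inter_span_α₃_α₄,
    isA2Subsystem_F4Roots_inter_span_α₁_β⟩
end

section
/- In the Weyl group of F_4, no element acts as an outer automorphism on the A_2 root subsystem R ∩ span(α_3,α_4) while acting as an inner automorphism (an element of the A_2 Weyl group) on the orthogonal A_2 subsystem R ∩ span(α_1,β), nor vice versa. -/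
/-!
The Weyl group of `F₄` preserves the root lattice `L = ℤ⁴ ∪ ((½,½,½,½) + ℤ⁴)`: every coroot lies
in `D₄`, the lattice dual to `L`. The vector `e₃ = (0,0,1,0) ∈ L` splits as `p₁ + p₂`, where
`p₁ = (-⅓,⅓,⅓,0)` and `p₂ = (⅓,-⅓,⅔,0)` are weights of the two orthogonal `A₂` subsystems with
root lattices `Q₁, Q₂ ⊆ L`. An inner automorphism fixes a weight modulo the root lattice, while an
outer one is `-w` for a Weyl element `w` and so negates it. Hence if `g` is outer on the first
subsystem and inner on the second, `g e₃ - e₃ ≡ -2p₁` modulo `Q₁ + Q₂`, so `2p₁ ∈ L`, which is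
false; the other case is symmetric.
-/

open Matrix

/-- The reflection in the root `α`, as a linear endomorphism of `ℝ⁴`. -/
noncomputable def reflLM (α : Fin 4 → ℝ) : Module.End ℝ (Fin 4 → ℝ) :=
  LinearMap.id - (2 / (α ⬝ᵥ α)) •
    (LinearMap.smulRight
      (⟨⟨fun v => v ⬝ᵥ α, by intros; simp [add_dotProduct]⟩,
        by intros; simp [smul_dotProduct]⟩ : (Fin 4 → ℝ) →ₗ[ℝ] ℝ) α)

/-- `g` acts as an inner automorphism on the root subsystem `S`:
on the span of `S` it agrees with an element of the Weyl group generated by the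
reflections in the roots of `S`. -/
def ActsInnerOn (g : Module.End ℝ (Fin 4 → ℝ)) (S : Set (Fin 4 → ℝ)) : Prop :=
  ∃ h ∈ Submonoid.closure {k : Module.End ℝ (Fin 4 → ℝ) | ∃ γ ∈ S, k = reflLM γ},
    ∀ v ∈ Submodule.span ℝ S, g v = h v

/-- `g` acts as an outer automorphism on the root subsystem `S`: it maps `S` to
itself but does not act as an inner automorphism. -/
def ActsOuterOn (g : Module.End ℝ (Fin 4 → ℝ)) (S : Set (Fin 4 → ℝ)) : Prop :=
  (∀ v ∈ S, g v ∈ S) ∧ ¬ ActsInnerOn g S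

attribute [local simp] Matrix.cons_val_two Matrix.cons_val_three

lemma reflLM_apply (α v : Fin 4 → ℝ) :
    reflLM α v = v - (2 * (v ⬝ᵥ α) / (α ⬝ᵥ α)) • α := by
  simp only [reflLM, LinearMap.sub_apply, LinearMap.id_apply, LinearMap.smul_apply,
    LinearMap.smulRight_apply, LinearMap.coe_mk, AddHom.coe_mk, smul_smul]
  congr 2
  ring

lemma reflLM_apply_of_two_mul_dotProduct_eq {α v : Fin 4 → ℝ} {n : ℤ} (hα : α ⬝ᵥ α ≠ 0)
    (h : 2 * (v ⬝ᵥ α) = n * (α ⬝ᵥ α)) : reflLM α v = v - n • α := by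
  rw [reflLM_apply, h, mul_div_cancel_right₀ _ hα, Int.cast_smul_eq_zsmul]

lemma dotProduct_reflLM {α : Fin 4 → ℝ} (hα : α ⬝ᵥ α ≠ 0) (u v : Fin 4 → ℝ) :
    reflLM α u ⬝ᵥ reflLM α v = u ⬝ᵥ v := by
  simp only [reflLM_apply, sub_dotProduct, dotProduct_sub, smul_dotProduct, dotProduct_smul,
    smul_eq_mul, dotProduct_comm α v]
  field_simp
  ring

section Closure

variable {R V : Type*} [Semiring R] [AddCommGroup V] [Module R V]

theorem Module.End.mapsTo_of_mem_closure {s : Set (Module.End R V)} {T : Set V}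
    (hs : ∀ f ∈ s, Set.MapsTo f T T) {h : Module.End R V} (hh : h ∈ Submonoid.closure s) :
    Set.MapsTo h T T := by
  induction hh using Submonoid.closure_induction with
  | mem f hf => exact hs f hf
  | one => exact Set.mapsTo_id T
  | mul f g _ _ hf hg => exact hf.comp hg

theorem Module.End.sub_mem_of_mem_closure {s : Set (Module.End R V)} {Q : AddSubgroup V} {p : V}
    (hQ : ∀ f ∈ s, Set.MapsTo f Q Q) (hp : ∀ f ∈ s, f p - p ∈ Q)
    {h : Module.End R V} (hh : h ∈ Submonoid.closure s) : h p - p ∈ Q := by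
  induction hh using Submonoid.closure_induction with
  | mem f hf => exact hp f hf
  | one => simp
  | mul f g hf _ ihf ihg =>
    have hfg : (f * g) p - p = f (g p - p) + (f p - p) := by
      rw [Module.End.mul_apply, map_sub]; abel
    rw [hfg]
    exact add_mem (mapsTo_of_mem_closure hQ hf ihg) ihf

end Closure

def reflClosure (S : Set (Fin 4 → ℝ)) : Submonoid (Module.End ℝ (Fin 4 → ℝ)) :=
  Submonoid.closure {k | ∃ γ ∈ S, k = reflLM γ}

lemma reflClosure_mono {S T : Set (Fin 4 → ℝ)} (h : S ⊆ T) : reflClosure S ≤ reflClosure T :=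
  Submonoid.closure_mono fun _ ⟨γ, hγ, hk⟩ => ⟨γ, h hγ, hk⟩

lemma dotProduct_map_of_mem_reflClosure {S : Set (Fin 4 → ℝ)} (hS : ∀ γ ∈ S, γ ⬝ᵥ γ ≠ 0)
    {g : Module.End ℝ (Fin 4 → ℝ)} (hg : g ∈ reflClosure S) (u v : Fin 4 → ℝ) :
    g u ⬝ᵥ g v = u ⬝ᵥ v := by
  induction hg using Submonoid.closure_induction generalizing u v with
  | mem k hk =>
    obtain ⟨γ, hγ, rfl⟩ := hk
    exact dotProduct_reflLM (hS γ hγ) u v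
  | one => rfl
  | mul f g _ _ hf hg => exact (hf _ _).trans (hg u v)

lemma Int.even_sum_iff_even_sum_sq {ι : Type*} (s : Finset ι) (x : ι → ℤ) :
    Even (∑ i ∈ s, x i) ↔ Even (∑ i ∈ s, x i ^ 2) := by
  refine (Int.even_sub.mp ?_).symm
  rw [← Finset.sum_sub_distrib]
  refine Finset.even_sum _ fun i _ => ?_
  rw [show x i ^ 2 - x i = x i * (x i - 1) by ring]
  exact Int.even_mul_pred_self _

/-- The lattice `ℤ⁴ ∪ ((½,½,½,½) + ℤ⁴)` spanned by the roots of `F₄`. -/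
def f4Lattice : AddSubgroup (Fin 4 → ℝ) where
  carrier := {v | ∀ i j, ∃ n : ℤ, v i + v j = n}
  add_mem' {v w} hv hw i j := by
    obtain ⟨m, hm⟩ := hv i j
    obtain ⟨n, hn⟩ := hw i j
    exact ⟨m + n, by push_cast; simp only [Pi.add_apply]; linarith⟩
  zero_mem' _ _ := ⟨0, by simp⟩
  neg_mem' {v} hv i j := by
    obtain ⟨m, hm⟩ := hv i j
    exact ⟨-m, by push_cast; simp only [Pi.neg_apply]; linarith⟩

lemma intCast_mem_f4Lattice (x : Fin 4 → ℤ) : (fun i => (x i : ℝ)) ∈ f4Lattice :=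
  fun i j => ⟨x i + x j, by push_cast; rfl⟩

lemma exists_dotProduct_eq_of_mem_f4Lattice {v : Fin 4 → ℝ} (hv : v ∈ f4Lattice) {x : Fin 4 → ℤ}
    (hx : Even (∑ i, x i)) : ∃ n : ℤ, v ⬝ᵥ (fun i => (x i : ℝ)) = n := by
  obtain ⟨k, hk⟩ := hx
  choose m hm using fun i => hv i 0
  refine ⟨∑ i, x i * m i - k * m 0, ?_⟩
  have hkR : ∑ i, (x i : ℝ) = k + k := by exact_mod_cast hk
  simp only [dotProduct, Fin.sum_univ_four] at hkR ⊢
  push_cast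
  linear_combination (x 0 : ℝ) * hm 0 + (x 1 : ℝ) * hm 1 + (x 2 : ℝ) * hm 2 + (x 3 : ℝ) * hm 3
    - v 0 * hkR - (k : ℝ) * hm 0

lemma exists_eq_intCast_of_entries_zero_or_unit {v : Fin 4 → ℝ}
    (h : ∀ i, v i = 0 ∨ v i = 1 ∨ v i = -1) :
    ∃ x : Fin 4 → ℤ, v = fun i => (x i : ℝ) := by
  choose x hx using fun i => show ∃ n : ℤ, v i = n by
    rcases h i with h | h | h <;> rw [h]
    exacts [⟨0, by simp⟩, ⟨1, by simp⟩, ⟨-1, by simp⟩]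
  exact ⟨x, funext hx⟩

lemma dotProduct_self_eq_ncard {v : Fin 4 → ℝ} (h : ∀ i, v i = 0 ∨ v i = 1 ∨ v i = -1) :
    v ⬝ᵥ v = {i | v i ≠ 0}.ncard := by
  classical
  rw [Set.ncard_eq_toFinset_card', Set.toFinset_ofPred, Finset.card_filter, dotProduct]
  push_cast
  refine Finset.sum_congr rfl fun i _ => ?_
  rcases h i with h | h | h <;> simp [h]

lemma exists_eq_half_intCast_of_entries_half {v : Fin 4 → ℝ} (h : ∀ i, v i = 1 / 2 ∨ v i = -1 / 2) :
    ∃ s : Fin 4 → ℤ, (∀ i, s i ^ 2 = 1) ∧ v = fun i => (s i : ℝ) / 2 := by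
  choose s hs using fun i => show ∃ n : ℤ, n ^ 2 = 1 ∧ v i = n / 2 by
    rcases h i with h | h <;> rw [h]
    exacts [⟨1, by norm_num⟩, ⟨-1, by norm_num⟩]
  exact ⟨s, fun i => (hs i).1, funext fun i => (hs i).2⟩

lemma dotProduct_self_of_mem_F4Roots {α : Fin 4 → ℝ} (hα : α ∈ F4Roots) :
    α ⬝ᵥ α = 1 ∨ α ⬝ᵥ α = 2 := by
  rcases hα with ⟨h, hc⟩ | ⟨h, hc⟩ | h
  · simp [dotProduct_self_eq_ncard h, hc]
  · simp [dotProduct_self_eq_ncard h, hc]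
  · obtain ⟨s, hs, rfl⟩ := exists_eq_half_intCast_of_entries_half h
    have hsR : ∀ i, (s i : ℝ) ^ 2 = 1 := fun i => by exact_mod_cast hs i
    left
    simp only [dotProduct, Fin.sum_univ_four]
    linear_combination (hsR 0 + hsR 1 + hsR 2 + hsR 3) / 4

lemma dotProduct_self_ne_zero_of_mem_F4Roots {α : Fin 4 → ℝ} (hα : α ∈ F4Roots) :
    α ⬝ᵥ α ≠ 0 := by
  rcases dotProduct_self_of_mem_F4Roots hα with h | h <;> simp [h]

lemma mem_f4Lattice_of_mem_F4Roots {α : Fin 4 → ℝ} (hα : α ∈ F4Roots) : α ∈ f4Lattice := by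
  intro i j
  rcases hα with ⟨h, -⟩ | ⟨h, -⟩ | h
  · obtain ⟨x, rfl⟩ := exists_eq_intCast_of_entries_zero_or_unit h
    exact intCast_mem_f4Lattice x i j
  · obtain ⟨x, rfl⟩ := exists_eq_intCast_of_entries_zero_or_unit h
    exact intCast_mem_f4Lattice x i j
  · rcases h i with hi | hi <;> rcases h j with hj | hj <;> rw [hi, hj]
    exacts [⟨1, by norm_num⟩, ⟨0, by norm_num⟩, ⟨0, by norm_num⟩, ⟨-1, by norm_num⟩]

lemma exists_coroot_of_mem_F4Roots {α : Fin 4 → ℝ} (hα : α ∈ F4Roots) :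
    ∃ x : Fin 4 → ℤ, Even (∑ i, x i) ∧ (2 / (α ⬝ᵥ α)) • α = fun i => (x i : ℝ) := by
  rcases hα with ⟨h, hc⟩ | ⟨h, hc⟩ | h
  · have hnorm : α ⬝ᵥ α = 2 := by rw [dotProduct_self_eq_ncard h, hc]; norm_num
    obtain ⟨x, rfl⟩ := exists_eq_intCast_of_entries_zero_or_unit h
    refine ⟨x, (Int.even_sum_iff_even_sum_sq _ _).mpr ⟨1, ?_⟩, by simp [hnorm]⟩
    simp only [dotProduct, ← sq] at hnorm
    exact_mod_cast hnorm
  · obtain ⟨x, rfl⟩ := exists_eq_intCast_of_entries_zero_or_unit h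
    refine ⟨fun i => 2 * x i, by rw [← Finset.mul_sum]; exact even_two_mul _, ?_⟩
    rw [dotProduct_self_eq_ncard h, hc]
    ext i
    simp
  · obtain ⟨s, hs, rfl⟩ := exists_eq_half_intCast_of_entries_half h
    refine ⟨s, (Int.even_sum_iff_even_sum_sq _ _).mpr ⟨2, by simp [hs]⟩, ?_⟩
    have hsR : ∀ i, (s i : ℝ) ^ 2 = 1 := fun i => by exact_mod_cast hs i
    have hnorm : ((fun i => (s i : ℝ) / 2) ⬝ᵥ fun i => (s i : ℝ) / 2) = 1 := by
      simp only [dotProduct, Fin.sum_univ_four]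
      linear_combination (hsR 0 + hsR 1 + hsR 2 + hsR 3) / 4
    ext i
    simp [hnorm]
    ring

lemma reflLM_mem_f4Lattice {α v : Fin 4 → ℝ} (hα : α ∈ F4Roots) (hv : v ∈ f4Lattice) :
    reflLM α v ∈ f4Lattice := by
  obtain ⟨x, hx, hcoroot⟩ := exists_coroot_of_mem_F4Roots hα
  obtain ⟨n, hn⟩ := exists_dotProduct_eq_of_mem_f4Lattice hv hx
  have hα0 := dotProduct_self_ne_zero_of_mem_F4Roots hα
  rw [reflLM_apply_of_two_mul_dotProduct_eq (n := n) hα0]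
  · exact sub_mem hv (zsmul_mem (mem_f4Lattice_of_mem_F4Roots hα) n)
  · rw [← hn, ← hcoroot, dotProduct_smul, smul_eq_mul]
    field_simp

lemma mem_f4Lattice_of_mem_reflClosure {g : Module.End ℝ (Fin 4 → ℝ)}
    (hg : g ∈ reflClosure F4Roots) {v : Fin 4 → ℝ} (hv : v ∈ f4Lattice) : g v ∈ f4Lattice := by
  refine Module.End.mapsTo_of_mem_closure ?_ hg hv
  rintro _ ⟨α, hα, rfl⟩ w hw
  exact reflLM_mem_f4Lattice hα hw

structure IsA2Base (a b : Fin 4 → ℝ) : Prop where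
  dotProduct_self_pos : 0 < a ⬝ᵥ a
  dotProduct_self_right : b ⬝ᵥ b = a ⬝ᵥ a
  two_mul_dotProduct : 2 * (a ⬝ᵥ b) = -(a ⬝ᵥ a)

def a2Lattice (a b : Fin 4 → ℝ) : AddSubgroup (Fin 4 → ℝ) := AddSubgroup.closure {a, b}

def a2Roots (a b : Fin 4 → ℝ) : Set (Fin 4 → ℝ) := {a, -a, b, -b, a + b, -(a + b)}

def IsA2Weight (a b v : Fin 4 → ℝ) : Prop :=
  ∃ m n : ℤ, 2 * (v ⬝ᵥ a) = m * (a ⬝ᵥ a) ∧ 2 * (v ⬝ᵥ b) = n * (a ⬝ᵥ a)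

lemma mem_a2Lattice {a b v : Fin 4 → ℝ} :
    v ∈ a2Lattice a b ↔ ∃ x y : ℤ, (x : ℝ) • a + (y : ℝ) • b = v := by
  simp only [a2Lattice, AddSubgroup.mem_closure_pair, Int.cast_smul_eq_zsmul]

lemma Int.eq_of_sq_sub_mul_add_sq_eq_one {x y : ℤ} (h : x ^ 2 - x * y + y ^ 2 = 1) :
    (x = 1 ∧ y = 0) ∨ (x = -1 ∧ y = 0) ∨ (x = 0 ∧ y = 1) ∨ (x = 0 ∧ y = -1) ∨
      (x = 1 ∧ y = 1) ∨ (x = -1 ∧ y = -1) := by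
  have hx₁ : -1 ≤ x := by nlinarith [sq_nonneg (x - 2 * y)]
  have hx₂ : x ≤ 1 := by nlinarith [sq_nonneg (x - 2 * y)]
  have hy₁ : -1 ≤ y := by nlinarith [sq_nonneg (2 * x - y)]
  have hy₂ : y ≤ 1 := by nlinarith [sq_nonneg (2 * x - y)]
  interval_cases x <;> interval_cases y <;> simp_all

lemma Int.sq_sub_mul_add_sq_ne_two (x y : ℤ) : x ^ 2 - x * y + y ^ 2 ≠ 2 := by
  have key : ∀ x y : ZMod 4, x ^ 2 - x * y + y ^ 2 ≠ 2 := by decide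
  exact fun h => key x y (by exact_mod_cast congrArg (Int.cast : ℤ → ZMod 4) h)

namespace IsA2Base

variable {a b : Fin 4 → ℝ}

lemma dotProduct_self_ne_zero (hab : IsA2Base a b) : a ⬝ᵥ a ≠ 0 :=
  hab.dotProduct_self_pos.ne'

lemma dotProduct_smul_add_smul (hab : IsA2Base a b) (x y x' y' : ℝ) :
    (x • a + y • b) ⬝ᵥ (x' • a + y' • b) =
      (x * x' + y * y' - (x * y' + y * x') / 2) * (a ⬝ᵥ a) := by
  simp only [add_dotProduct, dotProduct_add, smul_dotProduct, dotProduct_smul, smul_eq_mul,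
    dotProduct_comm b a, hab.dotProduct_self_right]
  linear_combination (x * y' + y * x') / 2 * hab.two_mul_dotProduct

lemma isA2Weight_of_mem (hab : IsA2Base a b) {v : Fin 4 → ℝ} (hv : v ∈ a2Lattice a b) :
    IsA2Weight a b v := by
  obtain ⟨x, y, rfl⟩ := mem_a2Lattice.mp hv
  refine ⟨2 * x - y, 2 * y - x, ?_, ?_⟩
  · simp only [add_dotProduct, smul_dotProduct, smul_eq_mul, dotProduct_comm b a]
    push_cast
    linear_combination (y : ℝ) * hab.two_mul_dotProduct
  · simp only [add_dotProduct, smul_dotProduct, smul_eq_mul, hab.dotProduct_self_right]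
    push_cast
    linear_combination (x : ℝ) * hab.two_mul_dotProduct

lemma reflLM_sub_mem (hab : IsA2Base a b) {γ v : Fin 4 → ℝ} (hγ : γ ∈ a2Lattice a b)
    (hγγ : γ ⬝ᵥ γ = a ⬝ᵥ a) (hv : IsA2Weight a b v) : reflLM γ v - v ∈ a2Lattice a b := by
  obtain ⟨m, n, hm, hn⟩ := hv
  obtain ⟨x, y, rfl⟩ := mem_a2Lattice.mp hγ
  rw [reflLM_apply_of_two_mul_dotProduct_eq (n := x * m + y * n)
    (hγγ ▸ hab.dotProduct_self_ne_zero)]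
  · rw [sub_sub_cancel_left]
    exact neg_mem (zsmul_mem hγ _)
  · simp only [dotProduct_add, dotProduct_smul, smul_eq_mul, hγγ]
    push_cast
    linear_combination (x : ℝ) * hm + (y : ℝ) * hn

lemma sub_mem_of_mem_reflClosure (hab : IsA2Base a b) {S : Set (Fin 4 → ℝ)}
    (hS : ∀ γ ∈ S, γ ∈ a2Lattice a b ∧ γ ⬝ᵥ γ = a ⬝ᵥ a) {h : Module.End ℝ (Fin 4 → ℝ)}
    (hh : h ∈ reflClosure S) {p : Fin 4 → ℝ} (hp : IsA2Weight a b p) :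
    h p - p ∈ a2Lattice a b := by
  refine Module.End.sub_mem_of_mem_closure ?_ ?_ hh
  · rintro _ ⟨γ, hγ, rfl⟩ v hv
    simpa using add_mem (hab.reflLM_sub_mem (hS γ hγ).1 (hS γ hγ).2 (hab.isA2Weight_of_mem hv)) hv
  · rintro _ ⟨γ, hγ, rfl⟩
    exact hab.reflLM_sub_mem (hS γ hγ).1 (hS γ hγ).2 hp

lemma mem_a2Roots (hab : IsA2Base a b) {γ : Fin 4 → ℝ} (hγ : γ ∈ a2Lattice a b)
    (hγγ : γ ⬝ᵥ γ = a ⬝ᵥ a) : γ ∈ a2Roots a b := by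
  obtain ⟨x, y, rfl⟩ := mem_a2Lattice.mp hγ
  have hN : x ^ 2 - x * y + y ^ 2 = 1 := by
    rw [hab.dotProduct_smul_add_smul] at hγγ
    have := mul_right_cancel₀ hab.dotProduct_self_ne_zero (hγγ.trans (one_mul _).symm)
    exact_mod_cast (by push_cast; linear_combination this : ((x ^ 2 - x * y + y ^ 2 : ℤ) : ℝ) = 1)
  rcases Int.eq_of_sq_sub_mul_add_sq_eq_one hN with ⟨rfl, rfl⟩ | ⟨rfl, rfl⟩ | ⟨rfl, rfl⟩ |
    ⟨rfl, rfl⟩ | ⟨rfl, rfl⟩ | ⟨rfl, rfl⟩ <;> simp [a2Roots, add_comm]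

lemma reflLM_left_left (hab : IsA2Base a b) : reflLM a a = -a := by
  rw [reflLM_apply_of_two_mul_dotProduct_eq (n := 2) hab.dotProduct_self_ne_zero
    (by push_cast; ring)]
  module

lemma reflLM_left_right (hab : IsA2Base a b) : reflLM a b = a + b := by
  rw [reflLM_apply_of_two_mul_dotProduct_eq (n := -1) hab.dotProduct_self_ne_zero
    (by rw [dotProduct_comm]; push_cast; linarith [hab.two_mul_dotProduct])]
  module

lemma reflLM_right_left (hab : IsA2Base a b) : reflLM b a = a + b := by
  rw [reflLM_apply_of_two_mul_dotProduct_eq (n := -1)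
    (hab.dotProduct_self_right ▸ hab.dotProduct_self_ne_zero)
    (by rw [hab.dotProduct_self_right]; push_cast; linarith [hab.two_mul_dotProduct])]
  module

lemma reflLM_right_right (hab : IsA2Base a b) : reflLM b b = -b := by
  rw [reflLM_apply_of_two_mul_dotProduct_eq (n := 2)
    (hab.dotProduct_self_right ▸ hab.dotProduct_self_ne_zero) (by push_cast; ring)]
  module

/-- The automorphism group of `A₂` is `W × {±1}`. -/
lemma exists_eq_or_eq_neg (hab : IsA2Base a b) {u v : Fin 4 → ℝ} (hu : u ∈ a2Roots a b)
    (hv : v ∈ a2Roots a b) (huv : u ⬝ᵥ v = a ⬝ᵥ b) :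
    ∃ w ∈ reflClosure {a, b}, (u = w a ∧ v = w b) ∨ (u = -w a ∧ v = -w b) := by
  have hsa : reflLM a ∈ reflClosure {a, b} := Submonoid.subset_closure ⟨a, by simp, rfl⟩
  have hsb : reflLM b ∈ reflClosure {a, b} := Submonoid.subset_closure ⟨b, by simp, rfl⟩
  have hc := hab.dotProduct_self_pos
  have hd := hab.two_mul_dotProduct
  have haa := hab.reflLM_left_left
  have hab' := hab.reflLM_left_right
  have hba := hab.reflLM_right_left
  have hbb := hab.reflLM_right_right
  simp only [a2Roots, Set.mem_insert_iff, Set.mem_singleton_iff] at hu hv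
  rcases hu with hu | hu | hu | hu | hu | hu <;>
    rcases hv with hv | hv | hv | hv | hv | hv <;> subst u v <;>
    (try simp only [add_dotProduct, dotProduct_add, neg_dotProduct, dotProduct_neg,
      dotProduct_comm b a, hab.dotProduct_self_right] at huv) <;>
    -- 24 of the 36 pairs have the wrong inner product; the other 12 are `(±w a, ±w b)`.
    first
    | (exfalso; linarith)
    | (refine ⟨1, one_mem _, ?_⟩; simp_all; done)
    | (refine ⟨reflLM a, hsa, ?_⟩; simp_all; done)
    | (refine ⟨reflLM b, hsb, ?_⟩; simp_all; done)
    | (refine ⟨reflLM a * reflLM b, mul_mem hsa hsb, ?_⟩; simp_all; done)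
    | (refine ⟨reflLM b * reflLM a, mul_mem hsb hsa, ?_⟩; simp_all; done)
    | (refine ⟨reflLM a * reflLM b * reflLM a, mul_mem (mul_mem hsa hsb) hsa, ?_⟩; simp_all)

end IsA2Base

structure IsF4A2Base (a b : Fin 4 → ℝ) : Prop extends IsA2Base a b where
  left_mem : a ∈ F4Roots
  right_mem : b ∈ F4Roots
  mem_a2Lattice_of_mem_span :
    ∀ v ∈ Submodule.span ℝ {a, b}, v ∈ f4Lattice → v ∈ a2Lattice a b

namespace IsF4A2Base

variable {a b : Fin 4 → ℝ}

lemma pair_subset (hab : IsF4A2Base a b) :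
    {a, b} ⊆ F4Roots ∩ (Submodule.span ℝ {a, b} : Set (Fin 4 → ℝ)) :=
  Set.insert_subset_iff.mpr ⟨⟨hab.left_mem, Submodule.subset_span (by simp)⟩,
    Set.singleton_subset_iff.mpr ⟨hab.right_mem, Submodule.subset_span (by simp)⟩⟩

lemma a2Lattice_le (hab : IsF4A2Base a b) : a2Lattice a b ≤ f4Lattice :=
  (AddSubgroup.closure_le _).mpr fun _ hγ =>
    mem_f4Lattice_of_mem_F4Roots (hab.pair_subset hγ).1

lemma mem_a2Lattice_of_mem (hab : IsF4A2Base a b) {γ : Fin 4 → ℝ}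
    (hγ : γ ∈ F4Roots ∩ (Submodule.span ℝ {a, b} : Set (Fin 4 → ℝ))) : γ ∈ a2Lattice a b :=
  hab.mem_a2Lattice_of_mem_span γ hγ.2 (mem_f4Lattice_of_mem_F4Roots hγ.1)

/-- The norm form `x² - xy + y²` of `A₂` never takes the value `2`, and roots of `F₄` have
norm `1` or `2`. -/
lemma dotProduct_self_of_mem (hab : IsF4A2Base a b) {γ : Fin 4 → ℝ}
    (hγ : γ ∈ F4Roots ∩ (Submodule.span ℝ {a, b} : Set (Fin 4 → ℝ))) : γ ⬝ᵥ γ = a ⬝ᵥ a := by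
  obtain ⟨x, y, rfl⟩ := mem_a2Lattice.mp (hab.mem_a2Lattice_of_mem hγ)
  have hN : ((x : ℝ) * x + y * y - (x * y + y * x) / 2) = ((x ^ 2 - x * y + y ^ 2 : ℤ) : ℝ) := by
    push_cast; ring
  have hγγ := dotProduct_self_of_mem_F4Roots hγ.1
  rw [hab.dotProduct_smul_add_smul, hN] at hγγ ⊢
  have hne := Int.sq_sub_mul_add_sq_ne_two x y
  rcases dotProduct_self_of_mem_F4Roots hab.left_mem with hc | hc <;> rw [hc] at hγγ ⊢ <;>
    rcases hγγ with h | h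
  · exact h
  · exact absurd (by exact_mod_cast (by linarith : ((x ^ 2 - x * y + y ^ 2 : ℤ) : ℝ) = 2)) hne
  · have : 2 * (x ^ 2 - x * y + y ^ 2) = 1 := by
      exact_mod_cast (by linarith : 2 * ((x ^ 2 - x * y + y ^ 2 : ℤ) : ℝ) = 1)
    omega
  · exact h

lemma sub_mem_of_actsInnerOn (hab : IsF4A2Base a b) {g : Module.End ℝ (Fin 4 → ℝ)}
    (hg : ActsInnerOn g (F4Roots ∩ (Submodule.span ℝ {a, b} : Set (Fin 4 → ℝ))))
    {p : Fin 4 → ℝ} (hp : IsA2Weight a b p) (hps : p ∈ Submodule.span ℝ {a, b}) :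
    g p - p ∈ a2Lattice a b := by
  obtain ⟨h, hh, hgh⟩ := hg
  rw [hgh p (Submodule.span_mono hab.pair_subset hps)]
  exact hab.sub_mem_of_mem_reflClosure
    (fun γ hγ => ⟨hab.mem_a2Lattice_of_mem hγ, hab.dotProduct_self_of_mem hγ⟩) hh hp

/-- An outer automorphism of `A₂` is `-w` for an element `w` of its Weyl group. -/
lemma add_mem_of_actsOuterOn (hab : IsF4A2Base a b) {g : Module.End ℝ (Fin 4 → ℝ)}
    (hg : g ∈ reflClosure F4Roots)
    (hout : ActsOuterOn g (F4Roots ∩ (Submodule.span ℝ {a, b} : Set (Fin 4 → ℝ))))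
    {p : Fin 4 → ℝ} (hp : IsA2Weight a b p) (hps : p ∈ Submodule.span ℝ {a, b}) :
    g p + p ∈ a2Lattice a b := by
  obtain ⟨hmaps, hnot⟩ := hout
  have hroot : ∀ γ ∈ ({a, b} : Set (Fin 4 → ℝ)), g γ ∈ a2Roots a b := fun γ hγ =>
    have hgγ := hmaps γ (hab.pair_subset hγ)
    hab.mem_a2Roots (hab.mem_a2Lattice_of_mem hgγ) (hab.dotProduct_self_of_mem hgγ)
  have hdot := dotProduct_map_of_mem_reflClosure
    (fun _ => dotProduct_self_ne_zero_of_mem_F4Roots) hg a b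
  obtain ⟨w, hw, ⟨ha, hb⟩ | ⟨ha, hb⟩⟩ :=
    hab.exists_eq_or_eq_neg (hroot a (by simp)) (hroot b (by simp)) hdot
  · refine absurd ⟨w, reflClosure_mono hab.pair_subset hw, fun v hv => ?_⟩ hnot
    refine LinearMap.eqOn_span (R := ℝ) (fun γ hγ => ?_)
      (Submodule.span_le.mpr Set.inter_subset_right hv)
    rcases hγ with rfl | rfl
    exacts [ha, hb]
  · have hgp : g p = -w p := by
      refine LinearMap.eqOn_span (R := ℝ) (g := -w) (fun γ hγ => ?_) hps
      rcases hγ with rfl | rfl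
      exacts [ha, hb]
    have hwp := hab.sub_mem_of_mem_reflClosure (fun γ hγ => ?_) hw hp
    · rw [hgp, show -w p + p = -(w p - p) by abel]
      exact neg_mem hwp
    · rcases hγ with rfl | rfl
      exacts [⟨AddSubgroup.subset_closure (by simp), rfl⟩,
        ⟨AddSubgroup.subset_closure (by simp), hab.dotProduct_self_right⟩]

end IsF4A2Base

lemma isF4A2Base_short : IsF4A2Base ![0, 0, 0, 1] ![1 / 2, -1 / 2, -1 / 2, -1 / 2] where
  dotProduct_self_pos := by norm_num [dotProduct, Fin.sum_univ_four]
  dotProduct_self_right := by norm_num [dotProduct, Fin.sum_univ_four]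
  two_mul_dotProduct := by norm_num [dotProduct, Fin.sum_univ_four]
  left_mem := by
    refine Or.inr (Or.inl ⟨fun i => by fin_cases i <;> simp, ?_⟩)
    rw [show {i : Fin 4 | ![(0 : ℝ), 0, 0, 1] i ≠ 0} = {3} by ext i; fin_cases i <;> simp]
    exact Set.ncard_singleton _
  right_mem := Or.inr (Or.inr fun i => by fin_cases i <;> simp)
  mem_a2Lattice_of_mem_span v hv hL := by
    obtain ⟨x, y, rfl⟩ := Submodule.mem_span_pair.mp hv
    obtain ⟨m, hm⟩ := hL 0 3
    obtain ⟨n, hn⟩ := hL 0 0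
    refine mem_a2Lattice.mpr ⟨m, n, ?_⟩
    simp at hm hn
    rw [← hm, ← hn]
    ext i; fin_cases i <;> simp <;> ring

lemma isF4A2Base_long : IsF4A2Base ![0, 1, -1, 0] ![1, 0, 1, 0] where
  dotProduct_self_pos := by norm_num [dotProduct, Fin.sum_univ_four]
  dotProduct_self_right := by norm_num [dotProduct, Fin.sum_univ_four]
  two_mul_dotProduct := by norm_num [dotProduct, Fin.sum_univ_four]
  left_mem := by
    refine Or.inl ⟨fun i => by fin_cases i <;> simp, ?_⟩
    rw [show {i : Fin 4 | ![(0 : ℝ), 1, -1, 0] i ≠ 0} = {1, 2} by ext i; fin_cases i <;> simp]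
    exact Set.ncard_pair (by decide)
  right_mem := by
    refine Or.inl ⟨fun i => by fin_cases i <;> simp, ?_⟩
    rw [show {i : Fin 4 | ![(1 : ℝ), 0, 1, 0] i ≠ 0} = {0, 2} by ext i; fin_cases i <;> simp]
    exact Set.ncard_pair (by decide)
  mem_a2Lattice_of_mem_span v hv hL := by
    obtain ⟨x, y, rfl⟩ := Submodule.mem_span_pair.mp hv
    obtain ⟨m, hm⟩ := hL 1 3
    obtain ⟨n, hn⟩ := hL 0 3
    refine mem_a2Lattice.mpr ⟨m, n, ?_⟩
    simp at hm hn
    rw [← hm, ← hn]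

lemma not_actsOuterOn_and_actsInnerOn {a b a' b' p p' : Fin 4 → ℝ} (hab : IsF4A2Base a b)
    (hab' : IsF4A2Base a' b') (hp : IsA2Weight a b p) (hps : p ∈ Submodule.span ℝ {a, b})
    (hp' : IsA2Weight a' b' p') (hps' : p' ∈ Submodule.span ℝ {a', b'})
    (hpp' : p + p' ∈ f4Lattice) (hpp : p + p ∉ f4Lattice) {g : Module.End ℝ (Fin 4 → ℝ)}
    (hg : g ∈ reflClosure F4Roots) :
    ¬ (ActsOuterOn g (F4Roots ∩ (Submodule.span ℝ {a, b} : Set (Fin 4 → ℝ))) ∧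
      ActsInnerOn g (F4Roots ∩ (Submodule.span ℝ {a', b'} : Set (Fin 4 → ℝ)))) := by
  rintro ⟨hout, hin⟩
  have h₁ := hab.a2Lattice_le (hab.add_mem_of_actsOuterOn hg hout hp hps)
  have h₂ := hab'.a2Lattice_le (hab'.sub_mem_of_actsInnerOn hin hp' hps')
  have h₃ := sub_mem (mem_f4Lattice_of_mem_reflClosure hg hpp') hpp'
  have hsum : p + p = (g p + p) + (g p' - p') - (g (p + p') - (p + p')) := by
    rw [map_add]; abel
  exact hpp (hsum ▸ sub_mem (add_mem h₁ h₂) h₃)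

lemma isA2Weight_short :
    IsA2Weight ![0, 0, 0, 1] ![1 / 2, -1 / 2, -1 / 2, -1 / 2] ![-1 / 3, 1 / 3, 1 / 3, 0] :=
  ⟨0, -1, by norm_num [dotProduct, Fin.sum_univ_four],
    by norm_num [dotProduct, Fin.sum_univ_four]⟩

lemma mem_span_short : (![-1 / 3, 1 / 3, 1 / 3, 0] : Fin 4 → ℝ) ∈
    Submodule.span ℝ {![0, 0, 0, 1], ![1 / 2, -1 / 2, -1 / 2, -1 / 2]} :=
  Submodule.mem_span_pair.mpr ⟨-1 / 3, -2 / 3, by ext i; fin_cases i <;> norm_num⟩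

lemma isA2Weight_long : IsA2Weight ![0, 1, -1, 0] ![1, 0, 1, 0] ![1 / 3, -1 / 3, 2 / 3, 0] :=
  ⟨-1, 1, by norm_num [dotProduct, Fin.sum_univ_four],
    by norm_num [dotProduct, Fin.sum_univ_four]⟩

lemma mem_span_long : (![1 / 3, -1 / 3, 2 / 3, 0] : Fin 4 → ℝ) ∈
    Submodule.span ℝ {![0, 1, -1, 0], ![1, 0, 1, 0]} :=
  Submodule.mem_span_pair.mpr ⟨-1 / 3, 1 / 3, by ext i; fin_cases i <;> norm_num⟩

lemma add_mem_f4Lattice_short_long :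
    (![-1 / 3, 1 / 3, 1 / 3, 0] + ![1 / 3, -1 / 3, 2 / 3, 0] : Fin 4 → ℝ) ∈ f4Lattice := by
  rw [show (![-1 / 3, 1 / 3, 1 / 3, 0] + ![1 / 3, -1 / 3, 2 / 3, 0] : Fin 4 → ℝ) =
      fun i => ((![0, 0, 1, 0] : Fin 4 → ℤ) i : ℝ) by
    ext i; fin_cases i <;> norm_num]
  exact intCast_mem_f4Lattice _

lemma add_self_short_not_mem_f4Lattice :
    (![-1 / 3, 1 / 3, 1 / 3, 0] + ![-1 / 3, 1 / 3, 1 / 3, 0] : Fin 4 → ℝ) ∉ f4Lattice := fun h => by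
  obtain ⟨n, hn⟩ := h 0 0
  have : (3 : ℤ) * n = -4 := by exact_mod_cast (by norm_num at hn; linarith : (3 : ℝ) * n = -4)
  omega

lemma add_self_long_not_mem_f4Lattice :
    (![1 / 3, -1 / 3, 2 / 3, 0] + ![1 / 3, -1 / 3, 2 / 3, 0] : Fin 4 → ℝ) ∉ f4Lattice := fun h => by
  obtain ⟨n, hn⟩ := h 0 0
  have : (3 : ℤ) * n = 4 := by exact_mod_cast (by norm_num at hn; linarith : (3 : ℝ) * n = 4)
  omega

/-- In the Weyl group of `F₄` (generated by the reflections in the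
roots), no element acts as an outer automorphism on the `A₂`-subsystem
`R ∩ span(α₃,α₄)` while acting as an inner automorphism on the orthogonal
`A₂`-subsystem `R ∩ span(α₁,β)`, nor vice versa. -/
theorem stmt15 :
    let α₁ : Fin 4 → ℝ := ![0, 1, -1, 0]
    let α₂ : Fin 4 → ℝ := ![0, 0, 1, -1]
    let α₃ : Fin 4 → ℝ := ![0, 0, 0, 1]
    let α₄ : Fin 4 → ℝ := ![1 / 2, -1 / 2, -1 / 2, -1 / 2]
    let β : Fin 4 → ℝ := α₁ + (3 : ℝ) • α₂ + (4 : ℝ) • α₃ + (2 : ℝ) • α₄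
    let S₁ : Set (Fin 4 → ℝ) := F4Roots ∩ (Submodule.span ℝ {α₃, α₄} : Set (Fin 4 → ℝ))
    let S₂ : Set (Fin 4 → ℝ) := F4Roots ∩ (Submodule.span ℝ {α₁, β} : Set (Fin 4 → ℝ))
    ∀ g ∈ Submonoid.closure
        {k : Module.End ℝ (Fin 4 → ℝ) | ∃ α ∈ F4Roots, k = reflLM α},
      ¬ (ActsOuterOn g S₁ ∧ ActsInnerOn g S₂) ∧
      ¬ (ActsInnerOn g S₁ ∧ ActsOuterOn g S₂) := by
  intro α₁ α₂ α₃ α₄ β S₁ S₂ g hg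
  have hβ : β = ![1, 0, 1, 0] := by
    ext i; fin_cases i <;> norm_num [β, α₁, α₂, α₃, α₄]
  clear_value β
  subst hβ
  refine ⟨not_actsOuterOn_and_actsInnerOn isF4A2Base_short isF4A2Base_long isA2Weight_short
    mem_span_short isA2Weight_long mem_span_long add_mem_f4Lattice_short_long
    add_self_short_not_mem_f4Lattice hg, fun ⟨hin, hout⟩ => ?_⟩
  refine not_actsOuterOn_and_actsInnerOn isF4A2Base_long isF4A2Base_short isA2Weight_long
    mem_span_long isA2Weight_short mem_span_short ?_ add_self_long_not_mem_f4Lattice hg ⟨hout, hin⟩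
  rw [add_comm]
  exact add_mem_f4Lattice_short_long
end
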